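/- Suppose C = (1+2v²)C₁ ⊕ (2v+2v²)C₂ ⊕ (v+2v²)C₃ is a cyclic code of length n over R, where C₁, C₂, C₃ are ternary cyclic codes with generator polynomials f₁, f₂, f₃ respectively (each fᵢ a monic divisor of xⁿ−1 in Z₃[x]). Then, under the polynomial representation of R^n as R[x]/(xⁿ−1), C is the ideal generated by (1+2v²)f₁, (2v+2v²)f₂ and (v+2v²)f₃, and |C| = 3^{3n − (deg f₁ + deg f₂ + deg f₃)}. -/

import Mathlib

/-- The ring `R = Z₃ + vZ₃ + v²Z₃ = Z₃[v]/(v³ - v)`, with elements written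
`a + v*b + v²*c` for `a b c : ZMod 3` (stored as the three coordinates). -/
@[ext]
structure R3 : Type where
  a : ZMod 3
  b : ZMod 3
  c : ZMod 3
  deriving DecidableEq

namespace R3

instance : Zero R3 := ⟨⟨0, 0, 0⟩⟩
instance : One R3 := ⟨⟨1, 0, 0⟩⟩
instance : Add R3 := ⟨fun x y => ⟨x.a + y.a, x.b + y.b, x.c + y.c⟩⟩
instance : Neg R3 := ⟨fun x => ⟨-x.a, -x.b, -x.c⟩⟩
/-- Multiplication induced by `v³ = v` :
`(a+vb+v²c)(a'+vb'+v²c') = aa' + v(ab'+a'b+bc'+b'c) + v²(ac'+a'c+bb'+cc')`. -/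
instance : Mul R3 := ⟨fun x y =>
  ⟨x.a * y.a,
   x.a * y.b + x.b * y.a + x.b * y.c + x.c * y.b,
   x.a * y.c + x.c * y.a + x.b * y.b + x.c * y.c⟩⟩

@[simp] lemma zero_a : (0 : R3).a = 0 := rfl
@[simp] lemma zero_b : (0 : R3).b = 0 := rfl
@[simp] lemma zero_c : (0 : R3).c = 0 := rfl
@[simp] lemma one_a : (1 : R3).a = 1 := rfl
@[simp] lemma one_b : (1 : R3).b = 0 := rfl
@[simp] lemma one_c : (1 : R3).c = 0 := rfl
@[simp] lemma add_a (x y : R3) : (x + y).a = x.a + y.a := rfl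
@[simp] lemma add_b (x y : R3) : (x + y).b = x.b + y.b := rfl
@[simp] lemma add_c (x y : R3) : (x + y).c = x.c + y.c := rfl
@[simp] lemma neg_a (x : R3) : (-x).a = -x.a := rfl
@[simp] lemma neg_b (x : R3) : (-x).b = -x.b := rfl
@[simp] lemma neg_c (x : R3) : (-x).c = -x.c := rfl
@[simp] lemma mul_a (x y : R3) : (x * y).a = x.a * y.a := rfl
@[simp] lemma mul_b (x y : R3) :
    (x * y).b = x.a * y.b + x.b * y.a + x.b * y.c + x.c * y.b := rfl
@[simp] lemma mul_c (x y : R3) :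
    (x * y).c = x.a * y.c + x.c * y.a + x.b * y.b + x.c * y.c := rfl

private lemma thm_add_assoc (x y z : R3) : x + y + z = x + (y + z) := by ext <;> simp <;> ring
private lemma thm_zero_add (x : R3) : 0 + x = x := by ext <;> simp
private lemma thm_add_zero (x : R3) : x + 0 = x := by ext <;> simp
private lemma thm_add_comm (x y : R3) : x + y = y + x := by ext <;> simp <;> ring
private lemma thm_mul_assoc (x y z : R3) : x * y * z = x * (y * z) := by ext <;> simp <;> ring
private lemma thm_one_mul (x : R3) : 1 * x = x := by ext <;> simp
private lemma thm_mul_one (x : R3) : x * 1 = x := by ext <;> simp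
private lemma thm_left_distrib (x y z : R3) : x * (y + z) = x * y + x * z := by ext <;> simp <;> ring
private lemma thm_right_distrib (x y z : R3) : (x + y) * z = x * z + y * z := by ext <;> simp <;> ring
private lemma thm_mul_comm (x y : R3) : x * y = y * x := by ext <;> simp <;> ring
private lemma thm_zero_mul (x : R3) : 0 * x = 0 := by ext <;> simp
private lemma thm_mul_zero (x : R3) : x * 0 = 0 := by ext <;> simp
private lemma thm_neg_add_cancel (x : R3) : -x + x = 0 := by ext <;> simp

instance : CommRing R3 where
  nsmul m x := ⟨m • x.a, m • x.b, m • x.c⟩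
  nsmul_zero x := by
    show (⟨(0:ℕ) • x.a, (0:ℕ) • x.b, (0:ℕ) • x.c⟩ : R3) = 0
    ext <;> simp
  nsmul_succ m x := by
    show (⟨(m+1) • x.a, (m+1) • x.b, (m+1) • x.c⟩ : R3) = ⟨m • x.a, m • x.b, m • x.c⟩ + x
    ext <;> simp <;> ring
  zsmul m x := ⟨m • x.a, m • x.b, m • x.c⟩
  zsmul_zero' x := by
    show (⟨(0:ℤ) • x.a, (0:ℤ) • x.b, (0:ℤ) • x.c⟩ : R3) = 0
    ext <;> simp
  zsmul_succ' m x := by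
    show (⟨(Int.ofNat m.succ) • x.a, (Int.ofNat m.succ) • x.b, (Int.ofNat m.succ) • x.c⟩ : R3)
      = ⟨(Int.ofNat m) • x.a, (Int.ofNat m) • x.b, (Int.ofNat m) • x.c⟩ + x
    ext <;> simp <;> ring
  zsmul_neg' m x := by
    show (⟨(Int.negSucc m) • x.a, (Int.negSucc m) • x.b, (Int.negSucc m) • x.c⟩ : R3)
      = -⟨(Int.ofNat m.succ) • x.a, (Int.ofNat m.succ) • x.b, (Int.ofNat m.succ) • x.c⟩
    ext <;> simp [Int.negSucc_eq] <;> ring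
  add_assoc := thm_add_assoc
  zero_add := thm_zero_add
  add_zero := thm_add_zero
  add_comm := thm_add_comm
  mul_assoc := thm_mul_assoc
  one_mul := thm_one_mul
  mul_one := thm_mul_one
  left_distrib := thm_left_distrib
  right_distrib := thm_right_distrib
  mul_comm := thm_mul_comm
  zero_mul := thm_zero_mul
  mul_zero := thm_mul_zero
  neg_add_cancel := thm_neg_add_cancel

/-- The element `v` of `R = Z₃[v]/(v³-v)`. -/
def v : R3 := ⟨0, 1, 0⟩

/-- The natural inclusion `Z₃ → R`. -/
def iota : ZMod 3 →+* R3 where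
  toFun t := ⟨t, 0, 0⟩
  map_one' := by ext <;> simp
  map_mul' x y := by ext <;> simp
  map_zero' := by ext <;> simp
  map_add' x y := by ext <;> simp

instance : Algebra (ZMod 3) R3 := iota.toAlgebra

end R3

open R3 in
/-- The Gray map `φ : R → Z₃³`, `φ(a+vb+v²c) = (a, a+b+c, a+2b+c)`. -/
def gray (r : R3) : ZMod 3 × ZMod 3 × ZMod 3 :=
  (r.a, r.a + r.b + r.c, r.a + 2 * r.b + r.c)

/-- The Gray map extended blockwise to `φ : R^n → Z₃^{3n}`, where `Z₃^{3n}` is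
identified with `Z₃^n × Z₃^n × Z₃^n` via the three length-`n` blocks. -/
def grayV {n : ℕ} (r : Fin n → R3) :
    (Fin n → ZMod 3) × (Fin n → ZMod 3) × (Fin n → ZMod 3) :=
  (fun i => (r i).a,
   fun i => (r i).a + (r i).b + (r i).c,
   fun i => (r i).a + 2 * (r i).b + (r i).c)

/-- Hamming weight on `Z₃^{3n} = Z₃^n × Z₃^n × Z₃^n`. -/
def wtH {n : ℕ} (x : (Fin n → ZMod 3) × (Fin n → ZMod 3) × (Fin n → ZMod 3)) : ℕ :=
  hammingNorm x.1 + hammingNorm x.2.1 + hammingNorm x.2.2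

/-- The Lee weight of an element of `R`: the Hamming weight of its Gray image. -/
def wtLee (r : R3) : ℕ :=
  (if r.a ≠ 0 then 1 else 0) + (if r.a + r.b + r.c ≠ 0 then 1 else 0) +
    (if r.a + 2 * r.b + r.c ≠ 0 then 1 else 0)

/-- The Lee weight on `R^n`, extended additively. -/
def wtLeeV {n : ℕ} (x : Fin n → R3) : ℕ := ∑ i, wtLee (x i)

/-- The cyclic shift `σ(c₀,…,c_{n-1}) = (c_{n-1},c₀,…,c_{n-2})`. -/
def cyc {α : Type*} {n : ℕ} [NeZero n] (c : Fin n → α) : Fin n → α :=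
  fun i => c (i - 1)

/-- The negacyclic shift `η(c₀,…,c_{n-1}) = (-c_{n-1},c₀,…,c_{n-2})`. -/
def nega {α : Type*} [Neg α] {n : ℕ} [NeZero n] (c : Fin n → α) : Fin n → α :=
  fun i => if i = 0 then -c (i - 1) else c (i - 1)

/-- The `λ`-constacyclic shift `(c₀,…,c_{n-1}) ↦ (λc_{n-1},c₀,…,c_{n-2})`. -/
def consta {α : Type*} [Mul α] {n : ℕ} [NeZero n] (lam : α) (c : Fin n → α) : Fin n → α :=
  fun i => if i = 0 then lam * c (i - 1) else c (i - 1)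

open Fin.NatCast in
/-- The quasi-cyclic shift `τ_{s,l}` of block length `l` on vectors of length `n = s*l`,
moving the last block of `l` coordinates to the front; equivalently, the cyclic shift
by `l` positions. -/
def shiftBy {α : Type*} {n : ℕ} [NeZero n] (l : ℕ) (c : Fin n → α) : Fin n → α :=
  fun i => c (i - (l : Fin n))

/-- Apply a map to each of the three blocks of `Z₃^{3n} = Z₃^n × Z₃^n × Z₃^n`. -/
def blockMap {n : ℕ} (f : (Fin n → ZMod 3) → (Fin n → ZMod 3))
    (x : (Fin n → ZMod 3) × (Fin n → ZMod 3) × (Fin n → ZMod 3)) :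
    (Fin n → ZMod 3) × (Fin n → ZMod 3) × (Fin n → ZMod 3) :=
  (f x.1, f x.2.1, f x.2.2)

/-- The Euclidean dual of a linear code over `R`. -/
def dualR {n : ℕ} (C : Submodule R3 (Fin n → R3)) : Submodule R3 (Fin n → R3) where
  carrier := {x | ∀ y ∈ C, ∑ i, x i * y i = 0}
  add_mem' := by
    intro p q hp hq y hy
    simp only [Set.mem_setOf_eq] at *
    simp [Pi.add_apply, add_mul, Finset.sum_add_distrib, hp y hy, hq y hy]
  zero_mem' := by intro y hy; simp
  smul_mem' := by
    intro r p hp y hy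
    simp only [Set.mem_setOf_eq] at *
    simp [Pi.smul_apply, smul_eq_mul, mul_assoc, ← Finset.mul_sum, hp y hy]

/-- The Euclidean dual of a ternary linear code. -/
def dualZ {n : ℕ} (C : Submodule (ZMod 3) (Fin n → ZMod 3)) :
    Submodule (ZMod 3) (Fin n → ZMod 3) where
  carrier := {x | ∀ y ∈ C, ∑ i, x i * y i = 0}
  add_mem' := by
    intro p q hp hq y hy
    simp only [Set.mem_setOf_eq] at *
    simp [Pi.add_apply, add_mul, Finset.sum_add_distrib, hp y hy, hq y hy]
  zero_mem' := by intro y hy; simp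
  smul_mem' := by
    intro r p hp y hy
    simp only [Set.mem_setOf_eq] at *
    simp [Pi.smul_apply, smul_eq_mul, mul_assoc, ← Finset.mul_sum, hp y hy]

/-- The Euclidean inner product on `Z₃^{3n} = Z₃^n × Z₃^n × Z₃^n`. -/
def inner3 {n : ℕ} (x y : (Fin n → ZMod 3) × (Fin n → ZMod 3) × (Fin n → ZMod 3)) : ZMod 3 :=
  ∑ i, x.1 i * y.1 i + ∑ i, x.2.1 i * y.2.1 i + ∑ i, x.2.2 i * y.2.2 i

/-- The Euclidean dual (as a set) of a subset of `Z₃^{3n}`. -/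
def dual3Set {n : ℕ} (S : Set ((Fin n → ZMod 3) × (Fin n → ZMod 3) × (Fin n → ZMod 3))) :
    Set ((Fin n → ZMod 3) × (Fin n → ZMod 3) × (Fin n → ZMod 3)) :=
  {x | ∀ y ∈ S, inner3 x y = 0}

/-- The first associated ternary code `C₁ = {a : ∃ b c, a+vb+v²c ∈ C}`. -/
def assoc1 {n : ℕ} (C : Set (Fin n → R3)) : Set (Fin n → ZMod 3) :=
  {x | ∃ r ∈ C, ∀ i, x i = (r i).a}

/-- The second associated ternary code `C₂ = {a+b+c : a+vb+v²c ∈ C}`. -/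
def assoc2 {n : ℕ} (C : Set (Fin n → R3)) : Set (Fin n → ZMod 3) :=
  {x | ∃ r ∈ C, ∀ i, x i = (r i).a + (r i).b + (r i).c}

/-- The third associated ternary code `C₃ = {a+2b+c : a+vb+v²c ∈ C}`. -/
def assoc3 {n : ℕ} (C : Set (Fin n → R3)) : Set (Fin n → ZMod 3) :=
  {x | ∃ r ∈ C, ∀ i, x i = (r i).a + 2 * (r i).b + (r i).c}

/-- The idempotent `e₁ = 1 + 2v²` of `R`. -/
noncomputable def e1 : R3 := 1 + 2 * R3.v ^ 2
/-- The idempotent `e₂ = 2v + 2v²` of `R`. -/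
noncomputable def e2 : R3 := 2 * R3.v + 2 * R3.v ^ 2
/-- The idempotent `e₃ = v + 2v²` of `R`. -/
noncomputable def e3 : R3 := R3.v + 2 * R3.v ^ 2

/-- Coordinatewise inclusion `Z₃^n → R^n`. -/
def emb {n : ℕ} (x : Fin n → ZMod 3) : Fin n → R3 := fun i => R3.iota (x i)

/-- The code `(1+2v²)C₁ ⊕ (2v+2v²)C₂ ⊕ (v+2v²)C₃ ⊆ R^n` built from three
ternary codes `C₁, C₂, C₃ ⊆ Z₃^n`. -/
def tri {n : ℕ} (C₁ C₂ C₃ : Set (Fin n → ZMod 3)) : Set (Fin n → R3) :=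
  {w | ∃ x ∈ C₁, ∃ y ∈ C₂, ∃ z ∈ C₃, w = e1 • emb x + e2 • emb y + e3 • emb z}

open Polynomial in
/-- The polynomial representation `(c₀,…,c_{n-1}) ↦ c₀ + c₁x + … + c_{n-1}x^{n-1}`
of a vector over `Z₃`. -/
noncomputable def toPolyZ {n : ℕ} (c : Fin n → ZMod 3) : Polynomial (ZMod 3) :=
  ∑ i : Fin n, Polynomial.C (c i) * Polynomial.X ^ (i : ℕ)

open Polynomial in
/-- The polynomial representation of a vector over `R`. -/
noncomputable def toPolyR {n : ℕ} (c : Fin n → R3) : Polynomial R3 :=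
  ∑ i : Fin n, Polynomial.C (c i) * Polynomial.X ^ (i : ℕ)

/-- The quotient map `Z₃[x] → Z₃[x]/(xⁿ - ε)`. -/
noncomputable def mkZ (n : ℕ) (ε : ZMod 3) :
    Polynomial (ZMod 3) →+*
      Polynomial (ZMod 3) ⧸ Ideal.span {Polynomial.X ^ n - Polynomial.C ε} :=
  Ideal.Quotient.mk _

/-- The quotient map `R[x] → R[x]/(xⁿ - ε)`. -/
noncomputable def mkR (n : ℕ) (ε : R3) :
    Polynomial R3 →+* Polynomial R3 ⧸ Ideal.span {Polynomial.X ^ n - Polynomial.C ε} :=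
  Ideal.Quotient.mk _

/-- `f` is the generator polynomial of the ternary cyclic (`ε = 1`) resp. negacyclic
(`ε = -1`) code `D` of length `n`: `f` is a monic divisor of `xⁿ - ε` and, under the
polynomial representation, `D` corresponds exactly to the ideal of `Z₃[x]/(xⁿ - ε)`
generated by `f`. -/
def IsGenPolyZ (n : ℕ) (ε : ZMod 3) (D : Set (Fin n → ZMod 3))
    (f : Polynomial (ZMod 3)) : Prop :=
  f.Monic ∧ f ∣ (Polynomial.X ^ n - Polynomial.C ε) ∧
    {p | ∃ c ∈ D, p = mkZ n ε (toPolyZ c)} = ↑(Ideal.span {mkZ n ε f})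

/-!
The idempotents `e₁, e₂, e₃` split `R` as `Z₃ × Z₃ × Z₃` (the Gray map is the inverse
of `(x, y, z) ↦ e₁x + e₂y + e₃z`), so `C` is in bijection with `C₁ × C₂ × C₃`. A ternary code
with generator polynomial `f ∣ xⁿ - 1 = f g` has `3 ^ deg g` words, because multiplication by
`f` maps the polynomials of degree `< deg g` bijectively onto the ideal `(f)` of
`Z₃[x]/(xⁿ - 1)`. Cyclicity of `C` means that its polynomial representation is closed
under multiplication by `x`, hence is an ideal, and it contains the three generators `eᵢ fᵢ`;
conversely every codeword is a sum `e₁ a₁ + e₂ a₂ + e₃ a₃` with `aᵢ ∈ (fᵢ)`.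
-/

open Polynomial

section QuotientByMonic

variable {S : Type*} [CommRing S] [Nontrivial S]

theorem Polynomial.eq_of_monic_dvd_sub_of_degree_lt {P p q : S[X]} (hP : P.Monic)
    (hp : p.degree < P.degree) (hq : q.degree < P.degree) (h : P ∣ p - q) : p = q := by
  rw [← (modByMonic_eq_self_iff hP).2 hp, ← (modByMonic_eq_self_iff hP).2 hq]
  exact modByMonic_eq_of_dvd_sub hP h

theorem Polynomial.card_span_mk_eq_pow {P f g : S[X]} (hP : P = f * g) (hf : f.Monic)
    (hg : g.Monic) :
    Nat.card (Ideal.span {Ideal.Quotient.mk (Ideal.span {P}) f}) = Nat.card S ^ g.natDegree := by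
  set mk := Ideal.Quotient.mk (Ideal.span {P})
  have mk_eq_mk (a b : S[X]) : mk a = mk b ↔ P ∣ a - b := by
    rw [Ideal.Quotient.eq, Ideal.mem_span_singleton]
  have hdeg : (g.natDegree : WithBot ℕ) = g.degree := (degree_eq_natDegree hg.ne_zero).symm
  let φ : degreeLT S g.natDegree → Ideal.span {mk f} := fun q =>
    ⟨mk (f * q), Ideal.mem_span_singleton'.2 ⟨mk q, by rw [map_mul, mul_comm]⟩⟩
  have hinj : Function.Injective φ := by
    rintro ⟨q₁, hq₁⟩ ⟨q₂, hq₂⟩ h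
    obtain ⟨s, hs⟩ := (mk_eq_mk (f * q₁) (f * q₂)).1 (congrArg Subtype.val h)
    have hdvd : g ∣ q₁ - q₂ := ⟨s, sub_eq_zero.1 <| hf.mul_right_eq_zero_iff.1 <| by
      rw [hP] at hs
      linear_combination hs⟩
    rw [mem_degreeLT, hdeg] at hq₁ hq₂
    exact Subtype.ext (eq_of_monic_dvd_sub_of_degree_lt hg hq₁ hq₂ hdvd)
  have hsurj : Function.Surjective φ := by
    rintro ⟨r, hr⟩
    obtain ⟨a, rfl⟩ := Ideal.mem_span_singleton'.1 hr
    obtain ⟨t, rfl⟩ := Ideal.Quotient.mk_surjective a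
    refine ⟨⟨t %ₘ g, mem_degreeLT.2 (hdeg ▸ degree_modByMonic_lt t hg)⟩,
      Subtype.ext ((mk_eq_mk (f * (t %ₘ g)) (t * f)).2 ⟨-(t /ₘ g), ?_⟩)⟩
    rw [hP, modByMonic_eq_sub_mul_div]
    ring
  rw [← Nat.card_congr (Equiv.ofBijective φ ⟨hinj, hsurj⟩),
    Nat.card_congr (degreeLTEquiv S _).toEquiv, Nat.card_fun, Nat.card_fin]

end QuotientByMonic

section VectorPolynomial

variable {S : Type*} [CommRing S] {n : ℕ}

theorem sum_C_mul_X_pow_eq_ofFn [DecidableEq S] (c : Fin n → S) :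
    ∑ i : Fin n, C (c i) * X ^ (i : ℕ) = ofFn n c := by
  simp [ofFn_eq_sum_monomial, C_mul_X_pow_eq_monomial]

theorem X_mul_sum_C_mul_X_pow_sub_cyc {m : ℕ} (c : Fin (m + 1) → S) :
    X * ∑ i, C (c i) * X ^ (i : ℕ) - ∑ i, C (cyc c i) * X ^ (i : ℕ) =
      C (c (Fin.last m)) * (X ^ (m + 1) - 1) := by
  have hcyc : ∑ i, C (cyc c i) * X ^ (i : ℕ) = ∑ j, C (c j) * X ^ ((j + 1 : Fin (m + 1)) : ℕ) :=
    (Equiv.sum_comp (Equiv.addRight 1) _).symm.trans (by simp [cyc])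
  rw [hcyc, Finset.mul_sum, ← Finset.sum_sub_distrib, Finset.sum_eq_single (Fin.last m)]
  · rw [Fin.val_add_one, if_pos rfl, Fin.val_last]
    ring
  · intro j _ hj
    rw [Fin.val_add_one, if_neg hj]
    ring
  · simp

end VectorPolynomial

section PolynomialRepresentation

variable {n : ℕ}

theorem toPolyZ_eq_ofFn (c : Fin n → ZMod 3) : toPolyZ c = ofFn n c :=
  sum_C_mul_X_pow_eq_ofFn c

theorem toPolyR_eq_ofFn (c : Fin n → R3) : toPolyR c = ofFn n c :=
  sum_C_mul_X_pow_eq_ofFn c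

theorem toPolyR_smul_emb (e : R3) (x : Fin n → ZMod 3) :
    toPolyR (e • emb x) = C e * (toPolyZ x).map R3.iota := by
  simp [toPolyR, toPolyZ, emb, Polynomial.map_sum, Finset.mul_sum, mul_assoc]

theorem mkZ_toPolyZ_injective [NeZero n] (ε : ZMod 3) :
    Function.Injective fun c : Fin n → ZMod 3 => mkZ n ε (toPolyZ c) := by
  intro c d h
  have hdeg (c : Fin n → ZMod 3) : (ofFn n c).degree < (X ^ n - C ε).degree := by
    rw [degree_X_pow_sub_C (Nat.pos_of_ne_zero (NeZero.ne n))]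
    exact ofFn_degree_lt c
  refine injective_ofFn n (eq_of_monic_dvd_sub_of_degree_lt (monic_X_pow_sub_C ε (NeZero.ne n))
    (hdeg c) (hdeg d) ?_)
  rw [← toPolyZ_eq_ofFn, ← toPolyZ_eq_ofFn, ← Ideal.mem_span_singleton]
  exact Ideal.Quotient.eq.1 h

theorem mkR_toPolyR_cyc [NeZero n] (c : Fin n → R3) :
    mkR n 1 (toPolyR (cyc c)) = mkR n 1 X * mkR n 1 (toPolyR c) := by
  obtain ⟨m, rfl⟩ := Nat.exists_eq_add_one_of_ne_zero (NeZero.ne n)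
  rw [← map_mul, mkR, Ideal.Quotient.eq, Ideal.mem_span_singleton, dvd_sub_comm, toPolyR,
    toPolyR, X_mul_sum_C_mul_X_pow_sub_cyc, map_one]
  exact dvd_mul_left _ _

noncomputable def quotMapIota (n : ℕ) :
    Polynomial (ZMod 3) ⧸ Ideal.span {X ^ n - C (1 : ZMod 3)} →+*
      Polynomial R3 ⧸ Ideal.span {X ^ n - C (1 : R3)} :=
  Ideal.quotientMap _ (mapRingHom R3.iota) <| Ideal.span_le.2 <| by simp

theorem quotMapIota_mkZ (p : Polynomial (ZMod 3)) :
    quotMapIota n (mkZ n 1 p) = mkR n 1 (p.map R3.iota) :=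
  Ideal.quotientMap_mk

end PolynomialRepresentation

section GeneratorPolynomial

variable {n : ℕ} {ε : ZMod 3} {D : Set (Fin n → ZMod 3)} {f : Polynomial (ZMod 3)}

theorem IsGenPolyZ.natDegree_le [NeZero n] (h : IsGenPolyZ n ε D f) : f.natDegree ≤ n :=
  (natDegree_le_of_dvd h.2.1 (monic_X_pow_sub_C ε (NeZero.ne n)).ne_zero).trans_eq
    natDegree_X_pow_sub_C

theorem IsGenPolyZ.card_eq [NeZero n] (h : IsGenPolyZ n ε D f) :
    Nat.card D = 3 ^ (n - f.natDegree) := by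
  obtain ⟨hf, ⟨g, hfg⟩, hD⟩ := h
  have hg : g.Monic := hf.of_mul_monic_left (hfg ▸ monic_X_pow_sub_C ε (NeZero.ne n))
  have hgdeg : g.natDegree = n - f.natDegree := by
    have := congrArg natDegree hfg
    rw [natDegree_X_pow_sub_C, hf.natDegree_mul hg] at this
    omega
  have hDimage : (fun c => mkZ n ε (toPolyZ c)) '' D = Ideal.span {mkZ n ε f} := by
    rw [← hD]
    ext p
    simp [eq_comm]
  rw [← Nat.card_image_of_injective (mkZ_toPolyZ_injective ε) D, hDimage, ← hgdeg]
  exact (card_span_mk_eq_pow hfg hf hg).trans (by rw [Nat.card_zmod])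

theorem IsGenPolyZ.mkZ_toPolyZ_mem (h : IsGenPolyZ n ε D f) {x : Fin n → ZMod 3} (hx : x ∈ D) :
    mkZ n ε (toPolyZ x) ∈ Ideal.span {mkZ n ε f} := by
  rw [← SetLike.mem_coe, ← h.2.2]
  exact ⟨x, hx, rfl⟩

theorem IsGenPolyZ.exists_mkZ_toPolyZ_eq (h : IsGenPolyZ n ε D f) :
    ∃ x ∈ D, mkZ n ε f = mkZ n ε (toPolyZ x) := by
  have : mkZ n ε f ∈ (Ideal.span {mkZ n ε f} : Set _) := Ideal.subset_span rfl
  rwa [← h.2.2] at this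

end GeneratorPolynomial

section IdempotentDecomposition

variable {n : ℕ}

theorem e1_eq : e1 = ⟨1, 0, 2⟩ := by
  ext <;> simp [e1, R3.v, pow_two] <;> decide

theorem e2_eq : e2 = ⟨0, 2, 2⟩ := by
  ext <;> simp [e2, R3.v, pow_two] <;> decide

theorem e3_eq : e3 = ⟨0, 1, 2⟩ := by
  ext <;> simp [e3, R3.v, pow_two] <;> decide

theorem grayV_tri (x y z : Fin n → ZMod 3) :
    grayV (e1 • emb x + e2 • emb y + e3 • emb z) = (x, y, z) := by
  simp only [grayV, e1_eq, e2_eq, e3_eq, Prod.mk.injEq]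
  refine ⟨?_, ?_, ?_⟩ <;> funext i <;> simp [emb, R3.iota] <;> ring_nf <;> reduce_mod_char

theorem tri_eq_image (C₁ C₂ C₃ : Set (Fin n → ZMod 3)) :
    tri C₁ C₂ C₃ =
      (fun p => e1 • emb p.1 + e2 • emb p.2.1 + e3 • emb p.2.2) '' (C₁ ×ˢ C₂ ×ˢ C₃) := by
  ext w
  simp only [tri, Set.mem_ofPred_eq, Set.mem_image, Set.mem_prod, Prod.exists]
  constructor
  · rintro ⟨x, hx, y, hy, z, hz, rfl⟩
    exact ⟨x, y, z, ⟨hx, hy, hz⟩, rfl⟩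
  · rintro ⟨x, y, z, ⟨hx, hy, hz⟩, rfl⟩
    exact ⟨x, hx, y, hy, z, hz, rfl⟩

theorem card_tri (C₁ C₂ C₃ : Set (Fin n → ZMod 3)) :
    Nat.card (tri C₁ C₂ C₃) = Nat.card C₁ * (Nat.card C₂ * Nat.card C₃) := by
  have hinj : Function.Injective fun p : (Fin n → ZMod 3) × (Fin n → ZMod 3) × (Fin n → ZMod 3) =>
      e1 • emb p.1 + e2 • emb p.2.1 + e3 • emb p.2.2 :=
    Function.LeftInverse.injective (g := grayV) fun p => grayV_tri p.1 p.2.1 p.2.2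
  simp only [tri_eq_image, Nat.card_image_of_injective hinj, Nat.card_coe_set_eq, Set.ncard_prod]

theorem card_tri_of_isGenPolyZ [NeZero n] {ε₁ ε₂ ε₃ : ZMod 3} {D₁ D₂ D₃ : Set (Fin n → ZMod 3)}
    {f₁ f₂ f₃ : Polynomial (ZMod 3)} (h₁ : IsGenPolyZ n ε₁ D₁ f₁) (h₂ : IsGenPolyZ n ε₂ D₂ f₂)
    (h₃ : IsGenPolyZ n ε₃ D₃ f₃) :
    Nat.card (tri D₁ D₂ D₃) = 3 ^ (3 * n - (f₁.natDegree + f₂.natDegree + f₃.natDegree)) := by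
  have := h₁.natDegree_le
  have := h₂.natDegree_le
  have := h₃.natDegree_le
  rw [card_tri, h₁.card_eq, h₂.card_eq, h₃.card_eq, ← pow_add, ← pow_add]
  congr 1
  omega

end IdempotentDecomposition

section CyclicCode

variable {n : ℕ}

theorem toPolyR_add (c d : Fin n → R3) : toPolyR (c + d) = toPolyR c + toPolyR d := by
  simp only [toPolyR_eq_ofFn, map_add]

theorem emb_zero : emb (0 : Fin n → ZMod 3) = 0 := by
  funext i
  simp [emb]

theorem exists_mkR_mul_toPolyR_eq [NeZero n] {K : Submodule R3 (Fin n → R3)}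
    (hK : ∀ c ∈ K, cyc c ∈ K) (q : Polynomial R3) {c : Fin n → R3} (hc : c ∈ K) :
    ∃ c' ∈ K, mkR n 1 (q * toPolyR c) = mkR n 1 (toPolyR c') := by
  induction q using Polynomial.induction_on with
  | C a =>
    refine ⟨a • c, K.smul_mem a hc, ?_⟩
    rw [toPolyR_eq_ofFn, toPolyR_eq_ofFn, map_smul, smul_eq_C_mul]
  | add p q hp hq =>
    obtain ⟨c₁, hc₁, h₁⟩ := hp
    obtain ⟨c₂, hc₂, h₂⟩ := hq
    refine ⟨c₁ + c₂, K.add_mem hc₁ hc₂, ?_⟩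
    rw [add_mul, map_add, h₁, h₂, toPolyR_add, map_add]
  | monomial k a ih =>
    obtain ⟨c', hc', h⟩ := ih
    refine ⟨cyc c', hK c' hc', ?_⟩
    rw [mkR_toPolyR_cyc, ← h, ← map_mul]
    ring_nf

noncomputable def cyclicCodeIdeal [NeZero n] (K : Submodule R3 (Fin n → R3))
    (hK : ∀ c ∈ K, cyc c ∈ K) : Ideal (Polynomial R3 ⧸ Ideal.span {X ^ n - C (1 : R3)}) where
  carrier := {p | ∃ c ∈ K, p = mkR n 1 (toPolyR c)}
  add_mem' := by
    rintro _ _ ⟨c, hc, rfl⟩ ⟨d, hd, rfl⟩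
    exact ⟨c + d, K.add_mem hc hd, by rw [toPolyR_add, map_add]⟩
  zero_mem' := ⟨0, K.zero_mem, by rw [toPolyR_eq_ofFn, map_zero, map_zero]⟩
  smul_mem' := by
    rintro r _ ⟨c, hc, rfl⟩
    obtain ⟨q, rfl⟩ := Ideal.Quotient.mk_surjective r
    obtain ⟨c', hc', h⟩ := exists_mkR_mul_toPolyR_eq hK q hc
    exact ⟨c', hc', by rw [← h, map_mul]; rfl⟩

theorem mkR_C_mul_map (e : R3) (p : Polynomial (ZMod 3)) :
    mkR n 1 (C e * p.map R3.iota) = mkR n 1 (C e) * quotMapIota n (mkZ n 1 p) := by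
  rw [quotMapIota_mkZ, map_mul]

variable {D : Set (Fin n → ZMod 3)} {f : Polynomial (ZMod 3)}

theorem IsGenPolyZ.mkR_toPolyR_smul_emb_mem (h : IsGenPolyZ n 1 D f) (e : R3)
    {x : Fin n → ZMod 3} (hx : x ∈ D) {I : Ideal (Polynomial R3 ⧸ Ideal.span {X ^ n - C (1 : R3)})}
    (hI : mkR n 1 (C e * f.map R3.iota) ∈ I) : mkR n 1 (toPolyR (e • emb x)) ∈ I := by
  obtain ⟨a, ha⟩ := Ideal.mem_span_singleton'.1 (h.mkZ_toPolyZ_mem hx)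
  rw [toPolyR_smul_emb, mkR_C_mul_map, ← ha, map_mul, mul_left_comm, ← mkR_C_mul_map]
  exact I.mul_mem_left _ hI

theorem IsGenPolyZ.mkR_C_mul_map_mem_cyclicCodeIdeal [NeZero n] (h : IsGenPolyZ n 1 D f)
    {e : R3} {K : Submodule R3 (Fin n → R3)} (hK : ∀ c ∈ K, cyc c ∈ K)
    (hDK : ∀ x ∈ D, e • emb x ∈ K) : mkR n 1 (C e * f.map R3.iota) ∈ cyclicCodeIdeal K hK := by
  obtain ⟨x, hx, hfx⟩ := h.exists_mkZ_toPolyZ_eq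
  exact ⟨e • emb x, hDK x hx, by rw [toPolyR_smul_emb, mkR_C_mul_map, mkR_C_mul_map, hfx]⟩

theorem mkR_toPolyR_mem_span_of_mem_tri {D₁ D₂ D₃ : Set (Fin n → ZMod 3)}
    {f₁ f₂ f₃ : Polynomial (ZMod 3)} (h₁ : IsGenPolyZ n 1 D₁ f₁) (h₂ : IsGenPolyZ n 1 D₂ f₂)
    (h₃ : IsGenPolyZ n 1 D₃ f₃) {c : Fin n → R3} (hc : c ∈ tri D₁ D₂ D₃) :
    mkR n 1 (toPolyR c) ∈ Ideal.span {mkR n 1 (C e1 * f₁.map R3.iota),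
      mkR n 1 (C e2 * f₂.map R3.iota), mkR n 1 (C e3 * f₃.map R3.iota)} := by
  obtain ⟨x, hx, y, hy, z, hz, rfl⟩ := hc
  simp only [toPolyR_add, map_add]
  refine add_mem (add_mem ?_ ?_) ?_
  · exact h₁.mkR_toPolyR_smul_emb_mem e1 hx (Ideal.subset_span (by simp))
  · exact h₂.mkR_toPolyR_smul_emb_mem e2 hy (Ideal.subset_span (by simp))
  · exact h₃.mkR_toPolyR_smul_emb_mem e3 hz (Ideal.subset_span (by simp))

end CyclicCode

/-- Suppose `C = (1+2v²)C₁ ⊕ (2v+2v²)C₂ ⊕ (v+2v²)C₃` is a cyclic code of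
length `n` over `R`, where the ternary cyclic codes `C₁, C₂, C₃` have generator
polynomials `f₁, f₂, f₃` (monic divisors of `xⁿ - 1` over `Z₃`). Then, under the
polynomial representation `R^n ≅ R[x]/(xⁿ-1)`, `C` is the ideal generated by
`(1+2v²)f₁`, `(2v+2v²)f₂`, `(v+2v²)f₃`, and `|C| = 3^{3n - (deg f₁ + deg f₂ + deg f₃)}`. -/
theorem statement10 (n : ℕ) [NeZero n] (C : Submodule R3 (Fin n → R3))
    (C₁ C₂ C₃ : Submodule (ZMod 3) (Fin n → ZMod 3))
    (f₁ f₂ f₃ : Polynomial (ZMod 3))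
    (h₁ : IsGenPolyZ n 1 (C₁ : Set (Fin n → ZMod 3)) f₁)
    (h₂ : IsGenPolyZ n 1 (C₂ : Set (Fin n → ZMod 3)) f₂)
    (h₃ : IsGenPolyZ n 1 (C₃ : Set (Fin n → ZMod 3)) f₃)
    (hC : (C : Set (Fin n → R3)) = tri (C₁ : Set (Fin n → ZMod 3)) C₂ C₃)
    (hCyc : cyc '' (C : Set (Fin n → R3)) = (C : Set (Fin n → R3))) :
    {p | ∃ c ∈ C, p = mkR n 1 (toPolyR c)} =
      ↑(Ideal.span
        {mkR n 1 (Polynomial.C e1 * f₁.map R3.iota),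
         mkR n 1 (Polynomial.C e2 * f₂.map R3.iota),
         mkR n 1 (Polynomial.C e3 * f₃.map R3.iota)}) ∧
    Nat.card C = 3 ^ (3 * n - (f₁.natDegree + f₂.natDegree + f₃.natDegree)) := by
  have hK : ∀ c ∈ C, cyc c ∈ C := fun c hc => by
    rw [← SetLike.mem_coe, ← hCyc]
    exact Set.mem_image_of_mem cyc hc
  have mem_C {x y z} (hx : x ∈ C₁) (hy : y ∈ C₂) (hz : z ∈ C₃) :
      e1 • emb x + e2 • emb y + e3 • emb z ∈ C := by
    rw [← SetLike.mem_coe, hC]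
    exact ⟨x, hx, y, hy, z, hz, rfl⟩
  refine ⟨Set.Subset.antisymm ?_ ?_, ?_⟩
  · rintro _ ⟨c, hc, rfl⟩
    exact mkR_toPolyR_mem_span_of_mem_tri h₁ h₂ h₃ (by rwa [← hC])
  · refine (Ideal.span_le (I := cyclicCodeIdeal C hK)).2 ?_
    rintro _ (rfl | rfl | rfl)
    · exact h₁.mkR_C_mul_map_mem_cyclicCodeIdeal hK fun x hx => by
        simpa [emb_zero] using mem_C hx C₂.zero_mem C₃.zero_mem
    · exact h₂.mkR_C_mul_map_mem_cyclicCodeIdeal hK fun y hy => by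
        simpa [emb_zero] using mem_C C₁.zero_mem hy C₃.zero_mem
    · exact h₃.mkR_C_mul_map_mem_cyclicCodeIdeal hK fun z hz => by
        simpa [emb_zero] using mem_C C₁.zero_mem C₂.zero_mem hz
  · rw [← card_tri_of_isGenPolyZ h₁ h₂ h₃, ← hC]
    rfl
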